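/- arXiv:1111.6112 — 2 statements merged into one kernel-verified Lean document; each statement's English description precedes it below -/
import Mathlib

section
/- Let R be an irreducible affine root system, Δ = (a_0,...,a_n) an ordered basis, and S := {i ∈ {0,...,n} : (ZR, a_i^∨) = 2Z} the set of indices of simple roots a with (ZR, a^∨) ⊆ 2Z. Then S has cardinality at most 2. -/
/-!
The gradients `α i = (Δ i).2` of the simple roots form a connected, linearly dependent family
with nonpositive mutual inner products and integral Cartan numbers `2⟪α a, α b⟫ / ⟪α b, α b⟫`:
an affine Dynkin diagram. An index in `S` is a vertex all of whose Cartan numbers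
`2⟪α a, α i⟫ / ⟪α i, α i⟫` are even. Since `4cos²θ < 4` except for an antiparallel pair, two
even vertices are orthogonal, and an even vertex `i` is a short end node joined by a double edge
to a single neighbour `p` (two neighbours would give a relation among the `α` not involving all
of them, whereas the relation of a connected obtuse family has full support). Replacing `α p`
by `α p + α i` and deleting `i` gives a smaller family of the same kind in which `p` is even, so
three even vertices would persist while the family shrinks to nothing.
-/

open scoped RealInnerProductSpace
noncomputable section

abbrev EV (n : ℕ) := EuclideanSpace ℝ (Fin n)

/- We model the space `Ê` of affine linear functions on `E = V` as `ℝ × V`: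
`(r, α)` is the function `x ↦ r + ⟪α, x⟫`, with gradient `α`. -/

/-- The reflection `s_a(b) = b - (a^∨, b) a` on `Ê`. -/
def affReflection {n : ℕ} (a b : ℝ × EV n) : ℝ × EV n :=
  b - (2 * ⟪a.2, b.2⟫ / ⟪a.2, a.2⟫) • a

/-- The pairing `(b, a^∨) = 2⟪Db, Da⟫/|Da|²`. -/
def affPairing {n : ℕ} (a b : ℝ × EV n) : ℝ :=
  2 * ⟪a.2, b.2⟫ / ⟪a.2, a.2⟫

lemma Int.le_neg_one_of_cast_mul_neg {m : ℤ} {r : ℝ} (hr : 0 < r) (h : (m : ℝ) * r < 0) :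
    m ≤ -1 := by
  have : (m : ℝ) < 0 := neg_of_mul_neg_left h hr.le
  exact Int.le_sub_one_of_lt (by exact_mod_cast this)

lemma Finset.sum_single_zsmul {M κ : Type*} [AddCommGroup M] [Fintype κ] [DecidableEq κ]
    (Δ : κ → M) (p : κ) (m : ℤ) : ∑ i, (Pi.single p m : κ → ℤ) i • Δ i = m • Δ p := by
  simp [Pi.single_apply, ite_smul]

lemma Finset.sum_sub_single_zsmul {M κ : Type*} [AddCommGroup M] [Fintype κ] [DecidableEq κ]
    (Δ : κ → M) (c : κ → ℤ) (p : κ) (m : ℤ) :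
    ∑ i, (c - Pi.single p m : κ → ℤ) i • Δ i = ∑ i, c i • Δ i - m • Δ p := by
  simp [sub_smul, Finset.sum_sub_distrib, Pi.single_apply, ite_smul]

lemma eq_smul_of_inner_mul_inner_eq {V : Type*} [NormedAddCommGroup V] [InnerProductSpace ℝ V]
    {x y : V} (hx : x ≠ 0) (h : ⟪x, y⟫ * ⟪x, y⟫ = ⟪x, x⟫ * ⟪y, y⟫) :
    y = (⟪x, y⟫ / ⟪x, x⟫) • x := by
  have hxx : ⟪x, x⟫ ≠ 0 := inner_self_ne_zero.2 hx
  refine sub_eq_zero.1 ((inner_self_eq_zero (𝕜 := ℝ)).1 ?_)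
  simp only [inner_sub_left, inner_sub_right, real_inner_smul_left, real_inner_smul_right,
    real_inner_comm x y]
  field_simp
  linear_combination -h

section Span

variable {V κ : Type*} [NormedAddCommGroup V] [InnerProductSpace ℝ V] [Fintype κ] [DecidableEq κ]
  {α : κ → V} {A : Finset κ}

lemma isOrtho_span_image_compl (hA : ∀ a ∈ A, ∀ b ∉ A, ⟪α a, α b⟫ = 0) :
    Submodule.span ℝ (α '' A) ⟂ Submodule.span ℝ (α '' ↑Aᶜ) :=
  Submodule.isOrtho_span.2 <| by
    rintro _ ⟨a, ha, rfl⟩ _ ⟨b, hb, rfl⟩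
    exact hA a ha b (Finset.mem_compl.1 hb)

lemma mem_span_compl_of_inner_nonpos (hA : ∀ a ∈ A, ∀ b ∉ A, ⟪α a, α b⟫ = 0) {c : κ → ℝ}
    (hc : ∀ i, 0 ≤ c i) (hle : ∀ a ∈ A, ⟪∑ i, c i • α i, α a⟫ ≤ 0) :
    ∑ i, c i • α i ∈ Submodule.span ℝ (α '' ↑Aᶜ) := by
  have hmem : ∀ B : Finset κ, ∑ i ∈ B, c i • α i ∈ Submodule.span ℝ (α '' B) := fun B =>
    Submodule.sum_mem _ fun i hi => Submodule.smul_mem _ _ (Submodule.subset_span ⟨i, hi, rfl⟩)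
  rw [← Finset.sum_add_sum_compl A] at hle ⊢
  set u := ∑ i ∈ A, c i • α i
  have hu : u = 0 := by
    refine (inner_self_eq_zero (𝕜 := ℝ)).1 (le_antisymm ?_ real_inner_self_nonneg)
    calc ⟪u, u⟫ = ⟪u + ∑ i ∈ Aᶜ, c i • α i, u⟫ := by
          rw [inner_add_left, (isOrtho_span_image_compl hA).symm.inner_eq (hmem _) (hmem A),
            add_zero]
      _ = ∑ a ∈ A, c a * ⟪u + ∑ i ∈ Aᶜ, c i • α i, α a⟫ := by
          simp only [u, inner_sum, real_inner_smul_right]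
      _ ≤ 0 := Finset.sum_nonpos fun a ha => mul_nonpos_of_nonneg_of_nonpos (hc a) (hle a ha)
  rw [hu, zero_add]
  exact hmem _

end Span

/-- Merging the leaf `i` into `p`. For a short leaf, `v p + v i` is orthogonal to `v i` and as
long as it, and its inner products with the other vectors are those of `v p`. -/
def leafContraction {ι M : Type*} [DecidableEq ι] [Add M] (v : ι → M) (i p : ι) : ι → M :=
  Function.update v p (v p + v i)

section leafContraction

variable {ι M : Type*} [DecidableEq ι] [Add M] {v : ι → M} {i p : ι}

lemma leafContraction_self : leafContraction v i p p = v p + v i :=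
  Function.update_self _ _ _

lemma leafContraction_of_ne {a : ι} (ha : a ≠ p) : leafContraction v i p a = v a :=
  Function.update_of_ne ha _ _

end leafContraction

section SimpleFamily

variable {V ι : Type*} [NormedAddCommGroup V] [InnerProductSpace ℝ V]

structure IsConnectedObtuse (I : Finset ι) (v : ι → V) : Prop where
  inner_nonpos : ∀ a ∈ I, ∀ b ∈ I, a ≠ b → ⟪v a, v b⟫ ≤ 0
  connected : ∀ A ⊆ I, (∀ a ∈ A, ∀ b ∈ I, b ∉ A → ⟪v a, v b⟫ = 0) → A = ∅ ∨ A = I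

/-- Modelled on the gradients of a basis of an irreducible affine root system: a connected
affine Dynkin diagram. -/
structure IsAffineSimpleFamily (I : Finset ι) (v : ι → V) : Prop
    extends IsConnectedObtuse I v where
  ne_zero : ∀ a ∈ I, v a ≠ 0
  crystallographic : ∀ a ∈ I, ∀ b ∈ I, ∃ m : ℤ, 2 * ⟪v a, v b⟫ = m * ⟪v b, v b⟫
  dependent : ∃ t : ι → ℝ, ∑ a ∈ I, t a • v a = 0 ∧ ∃ a ∈ I, t a ≠ 0

/-- All Cartan integers `2⟪v a, v i⟫ / ⟪v i, v i⟫` are even: for the gradients of a basis this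
is the condition `(ℤR, a_i^∨) ⊆ 2ℤ` defining `S`. -/
def IsEvenVertex (I : Finset ι) (v : ι → V) (i : ι) : Prop :=
  ∀ a ∈ I, ∃ m : ℤ, ⟪v a, v i⟫ = m * ⟪v i, v i⟫

structure IsShortLeaf (I : Finset ι) (v : ι → V) (i p : ι) : Prop where
  mem_left : i ∈ I
  mem_right : p ∈ I
  ne : p ≠ i
  inner_eq : ⟪v p, v i⟫ = -⟪v i, v i⟫
  inner_self_eq : ⟪v p, v p⟫ = 2 * ⟪v i, v i⟫
  inner_eq_zero : ∀ a ∈ I, a ≠ i → a ≠ p → ⟪v a, v i⟫ = 0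

variable {I : Finset ι} {v : ι → V}

namespace IsConnectedObtuse

/-- Writing a relation as `∑_P x • v = ∑_N (-x) • v` with disjoint supports, obtuseness makes
the common value have nonpositive square, so it vanishes and `P` is a union of components. -/
theorem nonpos_or_pos_of_sum_smul_eq_zero (h : IsConnectedObtuse I v) {x : ι → ℝ}
    (hx : ∑ a ∈ I, x a • v a = 0) : (∀ a ∈ I, x a ≤ 0) ∨ ∀ a ∈ I, 0 < x a := by
  classical
  set P := I.filter (0 < x ·)
  have hu : ∑ a ∈ P, x a • v a = ∑ b ∈ I.filter (¬ 0 < x ·), (-x b) • v b := by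
    rw [← Finset.sum_filter_add_sum_filter_not I (0 < x ·)] at hx
    simp only [neg_smul, Finset.sum_neg_distrib]
    exact eq_neg_of_add_eq_zero_left hx
  have hu0 : ∑ a ∈ P, x a • v a = 0 := by
    refine (inner_self_eq_zero (𝕜 := ℝ)).1 (le_antisymm ?_ real_inner_self_nonneg)
    nth_rewrite 2 [hu]
    rw [sum_inner]
    refine Finset.sum_nonpos fun a ha => ?_
    rw [inner_sum]
    refine Finset.sum_nonpos fun b hb => ?_
    obtain ⟨haI, hxa⟩ := Finset.mem_filter.1 ha
    obtain ⟨hbI, hxb⟩ := Finset.mem_filter.1 hb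
    rw [real_inner_smul_left, real_inner_smul_right]
    have := h.inner_nonpos a haI b hbI (by rintro rfl; exact hxb hxa)
    nlinarith [mul_nonneg hxa.le (by linarith [not_lt.1 hxb] : 0 ≤ -x b)]
  have hPI : P ⊆ I := Finset.filter_subset _ _
  have hcomp : ∀ a ∈ P, ∀ b ∈ I, b ∉ P → ⟪v a, v b⟫ = 0 := by
    intro a ha b hbI hbP
    have hterm : ∀ c ∈ P, x c * ⟪v c, v b⟫ ≤ 0 := fun c hc =>
      mul_nonpos_of_nonneg_of_nonpos (Finset.mem_filter.1 hc).2.le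
        (h.inner_nonpos c (hPI hc) b hbI (by rintro rfl; exact hbP hc))
    have hsum : ∑ c ∈ P, x c * ⟪v c, v b⟫ = 0 := by
      simpa only [sum_inner, real_inner_smul_left, inner_zero_left] using
        congrArg (⟪·, v b⟫) hu0
    have := (Finset.sum_eq_zero_iff_of_nonpos hterm).1 hsum a ha
    exact (mul_eq_zero.1 this).resolve_left (Finset.mem_filter.1 ha).2.ne'
  rcases h.connected P hPI hcomp with hP | hP
  · exact Or.inl fun a ha => not_lt.1 (Finset.filter_eq_empty_iff.1 hP ha)
  · exact Or.inr (Finset.filter_eq_self.1 hP)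

theorem pos_or_neg_of_sum_smul_eq_zero (h : IsConnectedObtuse I v) {x : ι → ℝ}
    (hx : ∑ a ∈ I, x a • v a = 0) (hne : ∃ a ∈ I, x a ≠ 0) :
    (∀ a ∈ I, 0 < x a) ∨ ∀ a ∈ I, x a < 0 := by
  have hx' : ∑ a ∈ I, (-x) a • v a = 0 := by simp [neg_smul, hx]
  obtain ⟨a, ha, hxa⟩ := hne
  rcases h.nonpos_or_pos_of_sum_smul_eq_zero hx with hle | hpos
  · rcases h.nonpos_or_pos_of_sum_smul_eq_zero hx' with hge | hneg
    · exact absurd (le_antisymm (hle a ha) (by simpa using hge a ha)) hxa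
    · exact Or.inr fun b hb => by simpa using hneg b hb
  · exact Or.inl hpos

theorem eq_pair_of_eq_smul [DecidableEq ι] (h : IsConnectedObtuse I v) {s p : ι} (hs : s ∈ I)
    (hp : p ∈ I) {μ : ℝ} (hμ : μ < 0) (hps : v p = μ • v s) : I = {s, p} := by
  have hsub : {s, p} ⊆ I := Finset.insert_subset hs (Finset.singleton_subset_iff.2 hp)
  have hcomp : ∀ a ∈ ({s, p} : Finset ι), ∀ b ∈ I, b ∉ ({s, p} : Finset ι) →
      ⟪v a, v b⟫ = 0 := by
    intro a ha b hb hbsp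
    simp only [Finset.mem_insert, Finset.mem_singleton, not_or] at ha hbsp
    have hsb := h.inner_nonpos s hs b hb (Ne.symm hbsp.1)
    have hpb := h.inner_nonpos p hp b hb (Ne.symm hbsp.2)
    rw [hps, real_inner_smul_left] at hpb
    have hsb0 : ⟪v s, v b⟫ = 0 := le_antisymm hsb (nonneg_of_mul_nonpos_right hpb hμ)
    rcases ha with rfl | rfl
    · exact hsb0
    · rw [hps, real_inner_smul_left, hsb0, mul_zero]
  exact ((h.connected _ hsub hcomp).resolve_left (Finset.insert_ne_empty _ _)).symm

theorem exists_inner_ne_zero (h : IsConnectedObtuse I v) {i j : ι} (hi : i ∈ I) (hj : j ∈ I)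
    (hji : j ≠ i) : ∃ p ∈ I, p ≠ i ∧ ⟪v p, v i⟫ ≠ 0 := by
  by_contra! hisol
  have hcomp : ∀ a ∈ ({i} : Finset ι), ∀ b ∈ I, b ∉ ({i} : Finset ι) → ⟪v a, v b⟫ = 0 := by
    intro a ha b hb hbi
    rw [Finset.mem_singleton.1 ha, real_inner_comm]
    exact hisol b hb (Finset.notMem_singleton.1 hbi)
  rcases h.connected {i} (Finset.singleton_subset_iff.2 hi) hcomp with h' | h'
  · exact Finset.singleton_ne_empty i h'
  · exact hji (Finset.mem_singleton.1 (h' ▸ hj))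

end IsConnectedObtuse

namespace IsAffineSimpleFamily

theorem exists_pos_sum_smul_eq_zero (h : IsAffineSimpleFamily I v) :
    ∃ t : ι → ℝ, (∀ a ∈ I, 0 < t a) ∧ ∑ a ∈ I, t a • v a = 0 := by
  obtain ⟨t, ht, hne⟩ := h.dependent
  rcases h.pos_or_neg_of_sum_smul_eq_zero ht hne with hpos | hneg
  · exact ⟨t, hpos, ht⟩
  · exact ⟨-t, fun a ha => neg_pos.2 (hneg a ha), by simp [neg_smul, ht]⟩

/-- The product of the Cartan integers of an edge is `4cos²θ`; it equals `4` only for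
antiparallel vectors, which form a component by themselves. -/
theorem mul_lt_four (h : IsAffineSimpleFamily I v) {a b w : ι} (ha : a ∈ I)
    (hb : b ∈ I) (hw : w ∈ I) (hab : a ≠ b) (hwa : w ≠ a) (hwb : w ≠ b) {m m' : ℤ}
    (hm : 2 * ⟪v a, v b⟫ = m * ⟪v b, v b⟫) (hm' : 2 * ⟪v b, v a⟫ = m' * ⟪v a, v a⟫) :
    m * m' < 4 := by
  classical
  have haa := real_inner_self_pos.2 (h.ne_zero a ha)
  have hbb := real_inner_self_pos.2 (h.ne_zero b hb)
  have hprod : ((m * m' : ℤ) : ℝ) * (⟪v a, v a⟫ * ⟪v b, v b⟫) = 4 * (⟪v a, v b⟫ * ⟪v a, v b⟫) := by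
    rw [real_inner_comm (v a) (v b)] at hm'
    push_cast
    linear_combination (-2 * ⟪v a, v b⟫) * hm' - ((m' : ℝ) * ⟪v a, v a⟫) * hm
  have hcs := real_inner_mul_inner_self_le (v a) (v b)
  by_contra! h4
  have h4' : (4 : ℝ) ≤ ((m * m' : ℤ) : ℝ) := by exact_mod_cast h4
  have heq : ⟪v a, v b⟫ * ⟪v a, v b⟫ = ⟪v a, v a⟫ * ⟪v b, v b⟫ := by
    nlinarith [mul_pos haa hbb]
  have hneg : ⟪v a, v b⟫ < 0 := by
    refine lt_of_le_of_ne (h.inner_nonpos a ha b hb hab) fun h0 => ?_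
    rw [h0, mul_zero] at heq
    exact (mul_pos haa hbb).ne heq
  have hpair := h.eq_pair_of_eq_smul ha hb (div_neg_of_neg_of_pos hneg haa)
    (eq_smul_of_inner_mul_inner_eq (h.ne_zero a ha) heq)
  have : w ∈ ({a, b} : Finset ι) := hpair ▸ hw
  simp only [Finset.mem_insert, Finset.mem_singleton] at this
  exact this.elim hwa hwb

theorem inner_eq_zero_of_isEvenVertex (h : IsAffineSimpleFamily I v) {s u w : ι}
    (hs : s ∈ I) (hu : u ∈ I) (hw : w ∈ I) (hsu : s ≠ u) (hws : w ≠ s) (hwu : w ≠ u)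
    (hes : IsEvenVertex I v s) (heu : IsEvenVertex I v u) : ⟪v s, v u⟫ = 0 := by
  by_contra h0
  have hneg := lt_of_le_of_ne (h.inner_nonpos s hs u hu hsu) h0
  obtain ⟨z, hz⟩ := heu s hs
  obtain ⟨z', hz'⟩ := hes u hu
  rw [real_inner_comm] at hz'
  have hz1 := Int.le_neg_one_of_cast_mul_neg (real_inner_self_pos.2 (h.ne_zero u hu)) (hz ▸ hneg)
  have hz'1 := Int.le_neg_one_of_cast_mul_neg (real_inner_self_pos.2 (h.ne_zero s hs)) (hz' ▸ hneg)
  have := h.mul_lt_four hs hu hw hsu hws hwu (m := 2 * z) (m' := 2 * z')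
    (by rw [hz]; push_cast; ring) (by rw [real_inner_comm, hz']; push_cast; ring)
  nlinarith

theorem inner_eq_neg_of_isEvenVertex (h : IsAffineSimpleFamily I v) {i p w : ι}
    (hi : i ∈ I) (hp : p ∈ I) (hw : w ∈ I) (hpi : p ≠ i) (hwi : w ≠ i) (hwp : w ≠ p)
    (hei : IsEvenVertex I v i) (hpi0 : ⟪v p, v i⟫ ≠ 0) :
    ⟪v p, v i⟫ = -⟪v i, v i⟫ ∧ ⟪v p, v p⟫ = 2 * ⟪v i, v i⟫ := by
  have hneg := lt_of_le_of_ne (h.inner_nonpos p hp i hi hpi) hpi0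
  obtain ⟨z, hz⟩ := hei p hp
  obtain ⟨m', hm'⟩ := h.crystallographic i hi p hp
  rw [real_inner_comm] at hm'
  have hz1 := Int.le_neg_one_of_cast_mul_neg (real_inner_self_pos.2 (h.ne_zero i hi)) (hz ▸ hneg)
  have hm'1 := Int.le_neg_one_of_cast_mul_neg (real_inner_self_pos.2 (h.ne_zero p hp))
    (by linarith : (m' : ℝ) * ⟪v p, v p⟫ < 0)
  have := h.mul_lt_four hp hi hw hpi hwp hwi (m := 2 * z) (m' := m')
    (by rw [hz]; push_cast; ring) (by rw [real_inner_comm, hm'])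
  obtain ⟨rfl, rfl⟩ : z = -1 ∧ m' = -1 := by constructor <;> nlinarith
  push_cast at hz hm'
  constructor <;> linarith

/-- `v p + 2 v i + v q` has square norm `2⟪v p, v q⟫ ≤ 0`, so it would be a relation not
involving `j`. -/
theorem eq_of_inner_eq_neg (h : IsAffineSimpleFamily I v) {i p q j : ι}
    (hi : i ∈ I) (hp : p ∈ I) (hq : q ∈ I) (hj : j ∈ I) (hpi : p ≠ i) (hqi : q ≠ i)
    (hjp : j ≠ p) (hji : j ≠ i) (hjq : j ≠ q)
    (hpi1 : ⟪v p, v i⟫ = -⟪v i, v i⟫) (hpp : ⟪v p, v p⟫ = 2 * ⟪v i, v i⟫)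
    (hqi1 : ⟪v q, v i⟫ = -⟪v i, v i⟫) (hqq : ⟪v q, v q⟫ = 2 * ⟪v i, v i⟫) : p = q := by
  classical
  by_contra hpq
  have hrel : v p + (2 : ℝ) • v i + v q = 0 := by
    refine (inner_self_eq_zero (𝕜 := ℝ)).1 (le_antisymm ?_ real_inner_self_nonneg)
    have := h.inner_nonpos p hp q hq hpq
    simp only [inner_add_left, inner_add_right, real_inner_smul_left, real_inner_smul_right,
      real_inner_comm (v p) (v i), real_inner_comm (v q) (v i), real_inner_comm (v p) (v q),
      hpi1, hpp, hqi1, hqq] at this ⊢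
    linarith
  set x : ι → ℝ := Pi.single p 1 + Pi.single i 2 + Pi.single q 1
  have hx : ∑ a ∈ I, x a • v a = 0 := by
    simp only [x, Pi.add_apply, add_smul, Finset.sum_add_distrib, Pi.single_apply, ite_smul,
      zero_smul, one_smul, Finset.sum_ite_eq', hp, hi, hq, if_true]
    exact hrel
  have hxi : x i ≠ 0 := by simp [x, hpi.symm, hqi.symm]
  have hxj : x j = 0 := by simp [x, hjp, hji, hjq]
  rcases h.pos_or_neg_of_sum_smul_eq_zero hx ⟨i, hi, hxi⟩ with hpos | hneg
  · exact (hpos j hj).ne' hxj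
  · exact (hneg j hj).ne hxj

theorem isShortLeaf_of_isEvenVertex (h : IsAffineSimpleFamily I v) {i p j : ι} (hi : i ∈ I)
    (hp : p ∈ I) (hj : j ∈ I) (hpi : p ≠ i) (hji : j ≠ i) (hei : IsEvenVertex I v i)
    (hpi0 : ⟪v p, v i⟫ ≠ 0) (hji0 : ⟪v j, v i⟫ = 0) : IsShortLeaf I v i p := by
  have hjne : ∀ q, ⟪v q, v i⟫ ≠ 0 → j ≠ q := by rintro q hq rfl; exact hq hji0
  obtain ⟨hpi1, hpp⟩ := h.inner_eq_neg_of_isEvenVertex hi hp hj hpi hji (hjne p hpi0) hei hpi0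
  refine ⟨hi, hp, hpi, hpi1, hpp, fun q hq hqi hqp => ?_⟩
  by_contra hqi0
  obtain ⟨hqi1, hqq⟩ := h.inner_eq_neg_of_isEvenVertex hi hq hj hqi hji (hjne q hqi0) hei hqi0
  exact hqp (h.eq_of_inner_eq_neg hi hp hq hj hpi hqi (hjne p hpi0) hji (hjne q hqi0)
    hpi1 hpp hqi1 hqq).symm

end IsAffineSimpleFamily

theorem IsShortLeaf.eq_of_sum_smul_eq_zero {i p : ι} (hl : IsShortLeaf I v i p) (hi : v i ≠ 0)
    {t : ι → ℝ} (ht : ∑ a ∈ I, t a • v a = 0) : t i = t p := by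
  have h0 : ∑ a ∈ I, t a * ⟪v a, v i⟫ = 0 := by
    simpa only [sum_inner, real_inner_smul_left, inner_zero_left] using congrArg (⟪·, v i⟫) ht
  rw [Finset.sum_eq_add_of_mem i p hl.mem_left hl.mem_right hl.ne.symm
    (fun a ha hne => by rw [hl.inner_eq_zero a ha hne.1 hne.2, mul_zero]), hl.inner_eq] at h0
  have hii := real_inner_self_pos.2 hi
  nlinarith

variable [DecidableEq ι] {i p : ι}

namespace IsShortLeaf

lemma inner_leafContraction (hl : IsShortLeaf I v i p) {a b : ι} (ha : a ∈ I.erase i)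
    (hb : b ∈ I.erase i) (hab : a ≠ b) :
    ⟪leafContraction v i p a, leafContraction v i p b⟫ = ⟪v a, v b⟫ := by
  have hvi : ∀ c ∈ I.erase i, c ≠ p → ⟪v i, v c⟫ = 0 := fun c hc hcp => by
    rw [real_inner_comm]
    exact hl.inner_eq_zero c (Finset.mem_of_mem_erase hc) (Finset.ne_of_mem_erase hc) hcp
  by_cases hap : a = p
  · subst hap
    rw [leafContraction_self, leafContraction_of_ne hab.symm, inner_add_left,
      hvi b hb hab.symm, add_zero]
  by_cases hbp : b = p
  · subst hbp
    rw [leafContraction_self, leafContraction_of_ne hap, inner_add_right,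
      real_inner_comm (v i), hvi a ha hap, add_zero]
  rw [leafContraction_of_ne hap, leafContraction_of_ne hbp]

lemma inner_self_leafContraction (hl : IsShortLeaf I v i p) :
    ⟪leafContraction v i p p, leafContraction v i p p⟫ = ⟪v i, v i⟫ := by
  rw [leafContraction_self, real_inner_add_add_self, hl.inner_eq, hl.inner_self_eq]
  ring

lemma isConnectedObtuse_leafContraction (hl : IsShortLeaf I v i p) (h : IsConnectedObtuse I v) :
    IsConnectedObtuse (I.erase i) (leafContraction v i p) where
  inner_nonpos a ha b hb hab := hl.inner_leafContraction ha hb hab ▸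
    h.inner_nonpos a (Finset.mem_of_mem_erase ha) b (Finset.mem_of_mem_erase hb) hab
  connected A hA hcomp := by
    have hcomp' : ∀ a ∈ A, ∀ b ∈ I.erase i, b ∉ A → ⟪v a, v b⟫ = 0 := fun a ha b hb hbA =>
      hl.inner_leafContraction (hA ha) hb (by rintro rfl; exact hbA ha) ▸ hcomp a ha b hb hbA
    have hAi : i ∉ A := fun hiA => Finset.notMem_erase i I (hA hiA)
    by_cases hpA : p ∈ A
    · -- the component of `p` in `I` also contains `i`
      have hcomp'' : ∀ a ∈ insert i A, ∀ b ∈ I, b ∉ insert i A → ⟪v a, v b⟫ = 0 := by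
        intro a ha b hb hbA
        rw [Finset.mem_insert, not_or] at hbA
        rcases Finset.mem_insert.1 ha with rfl | ha
        · rw [real_inner_comm]
          exact hl.inner_eq_zero b hb hbA.1 (by rintro rfl; exact hbA.2 hpA)
        · exact hcomp' a ha b (Finset.mem_erase.2 ⟨hbA.1, hb⟩) hbA.2
      have hsub : insert i A ⊆ I := Finset.insert_subset hl.mem_left
        (hA.trans (Finset.erase_subset i I))
      rcases h.connected _ hsub hcomp'' with h' | h'
      · exact absurd h' (Finset.insert_ne_empty i A)
      · right
        rw [← h', Finset.erase_insert hAi]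
    · have hcomp'' : ∀ a ∈ A, ∀ b ∈ I, b ∉ A → ⟪v a, v b⟫ = 0 := by
        intro a ha b hb hbA
        by_cases hbi : b = i
        · subst hbi
          exact hl.inner_eq_zero a (Finset.mem_of_mem_erase (hA ha))
            (Finset.ne_of_mem_erase (hA ha)) (by rintro rfl; exact hpA ha)
        · exact hcomp' a ha b (Finset.mem_erase.2 ⟨hbi, hb⟩) hbA
      rcases h.connected A (hA.trans (Finset.erase_subset i I)) hcomp'' with h' | h'
      · exact Or.inl h'
      · exact absurd (h' ▸ hl.mem_left) hAi

lemma isAffineSimpleFamily_leafContraction (hl : IsShortLeaf I v i p)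
    (h : IsAffineSimpleFamily I v) : IsAffineSimpleFamily (I.erase i) (leafContraction v i p) where
  toIsConnectedObtuse := hl.isConnectedObtuse_leafContraction h.toIsConnectedObtuse
  ne_zero a ha := by
    by_cases hap : a = p
    · subst hap
      rw [← inner_self_ne_zero (𝕜 := ℝ), hl.inner_self_leafContraction, inner_self_ne_zero]
      exact h.ne_zero i hl.mem_left
    · rw [leafContraction_of_ne hap]
      exact h.ne_zero a (Finset.mem_of_mem_erase ha)
  crystallographic a ha b hb := by
    by_cases hab : a = b
    · exact ⟨2, by subst hab; push_cast; ring⟩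
    obtain ⟨m, hm⟩ := h.crystallographic a (Finset.mem_of_mem_erase ha) b
      (Finset.mem_of_mem_erase hb)
    rw [hl.inner_leafContraction ha hb hab]
    by_cases hbp : b = p
    · -- halving the square length of `v p` doubles the Cartan integer
      subst hbp
      refine ⟨2 * m, ?_⟩
      rw [hl.inner_self_leafContraction, hm, hl.inner_self_eq]
      push_cast
      ring
    · exact ⟨m, by rw [leafContraction_of_ne hbp, hm]⟩
  dependent := by
    obtain ⟨t, htpos, ht⟩ := h.exists_pos_sum_smul_eq_zero
    have htip := hl.eq_of_sum_smul_eq_zero (h.ne_zero i hl.mem_left) ht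
    have hpI : p ∈ I.erase i := Finset.mem_erase.2 ⟨hl.ne, hl.mem_right⟩
    refine ⟨t, ?_, p, hpI, (htpos p hl.mem_right).ne'⟩
    rw [← Finset.add_sum_erase _ _ hpI, leafContraction_self,
      Finset.sum_congr rfl fun a ha => by rw [leafContraction_of_ne (Finset.ne_of_mem_erase ha)]]
    rw [← Finset.add_sum_erase _ _ hl.mem_left, ← Finset.add_sum_erase _ _ hpI, htip] at ht
    rw [← ht, smul_add]
    abel

lemma isEvenVertex_leafContraction_right (hl : IsShortLeaf I v i p)
    (h : IsAffineSimpleFamily I v) : IsEvenVertex (I.erase i) (leafContraction v i p) p := by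
  intro a ha
  by_cases hap : a = p
  · exact ⟨1, by subst hap; push_cast; ring⟩
  obtain ⟨m, hm⟩ := h.crystallographic a (Finset.mem_of_mem_erase ha) p hl.mem_right
  refine ⟨m, ?_⟩
  rw [hl.inner_leafContraction ha (Finset.mem_erase.2 ⟨hl.ne, hl.mem_right⟩) hap,
    hl.inner_self_leafContraction]
  rw [hl.inner_self_eq] at hm
  linarith

lemma isEvenVertex_leafContraction (hl : IsShortLeaf I v i p) {j : ι} (hjI : j ∈ I.erase i)
    (hjp : j ≠ p) (hj : IsEvenVertex I v j) :
    IsEvenVertex (I.erase i) (leafContraction v i p) j := by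
  intro a ha
  by_cases haj : a = j
  · exact ⟨1, by subst haj; push_cast; ring⟩
  obtain ⟨m, hm⟩ := hj a (Finset.mem_of_mem_erase ha)
  refine ⟨m, ?_⟩
  rw [hl.inner_leafContraction ha hjI haj, leafContraction_of_ne hjp, hm]

end IsShortLeaf

namespace IsAffineSimpleFamily

/-- Three pairwise orthogonal even vertices are short leaves; merging one of them into its
neighbour leaves three even vertices in a smaller family. -/
theorem eq_or_eq_or_eq_of_isEvenVertex (h : IsAffineSimpleFamily I v) {i j k : ι} (hi : i ∈ I)
    (hj : j ∈ I) (hk : k ∈ I) (hei : IsEvenVertex I v i) (hej : IsEvenVertex I v j)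
    (hek : IsEvenVertex I v k) : i = j ∨ i = k ∨ j = k := by
  induction hcard : I.card generalizing I v i with
  | zero => exact absurd hi (by simp [Finset.card_eq_zero.1 hcard])
  | succ N ih =>
    by_contra! ⟨hij, hik, hjk⟩
    have hji0 := h.inner_eq_zero_of_isEvenVertex hj hi hk hij.symm hjk.symm hik.symm hej hei
    have hki0 := h.inner_eq_zero_of_isEvenVertex hk hi hj hik.symm hjk hij.symm hek hei
    obtain ⟨p, hp, hpi, hpi0⟩ := h.exists_inner_ne_zero hi hj hij.symm
    have hl := h.isShortLeaf_of_isEvenVertex hi hp hj hpi hij.symm hei hpi0 hji0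
    have hpj : p ≠ j := by rintro rfl; exact hpi0 hji0
    have hpk : p ≠ k := by rintro rfl; exact hpi0 hki0
    have hjI : j ∈ I.erase i := Finset.mem_erase.2 ⟨hij.symm, hj⟩
    have hkI : k ∈ I.erase i := Finset.mem_erase.2 ⟨hik.symm, hk⟩
    rcases ih (hl.isAffineSimpleFamily_leafContraction h) (Finset.mem_erase.2 ⟨hpi, hp⟩) hjI hkI
      (hl.isEvenVertex_leafContraction_right h) (hl.isEvenVertex_leafContraction hjI hpj.symm hej)
      (hl.isEvenVertex_leafContraction hkI hpk.symm hek)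
      (by rw [Finset.card_erase_of_mem hi, hcard, Nat.add_sub_cancel]) with h' | h' | h'
    exacts [hpj h', hpk h', hjk h']

theorem ncard_isEvenVertex_le_two (h : IsAffineSimpleFamily I v) :
    {i | i ∈ I ∧ IsEvenVertex I v i}.ncard ≤ 2 := by
  have hfin : {i | i ∈ I ∧ IsEvenVertex I v i}.Finite :=
    I.finite_toSet.subset fun i hi => hi.1
  by_contra! h3
  obtain ⟨i, j, k, ⟨hi, hei⟩, ⟨hj, hej⟩, ⟨hk, hek⟩, hij, hik, hjk⟩ :=
    (Set.two_lt_ncard_iff hfin).1 h3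
  rcases h.eq_or_eq_or_eq_of_isEvenVertex hi hj hk hei hej hek with h' | h' | h'
  exacts [hij h', hik h', hjk h']

end IsAffineSimpleFamily

end SimpleFamily

section AffineRootSystem

variable {n : ℕ}

lemma affPairing_eq_iff {a : ℝ × EV n} (ha : a.2 ≠ 0) (b : ℝ × EV n) {x : ℝ} :
    affPairing a b = x ↔ 2 * ⟪b.2, a.2⟫ = x * ⟪a.2, a.2⟫ := by
  rw [affPairing, div_eq_iff (inner_self_ne_zero.2 ha), real_inner_comm]

lemma affPairing_pos {a b : ℝ × EV n} (ha : a.2 ≠ 0) (h : 0 < ⟪b.2, a.2⟫) :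
    0 < affPairing a b := by
  rw [affPairing, real_inner_comm]
  exact div_pos (by linarith) (real_inner_self_pos.2 ha)

lemma affReflection_eq_sub_zsmul {a b : ℝ × EV n} {m : ℤ} (h : affPairing a b = m) :
    affReflection a b = b - m • a := by
  rw [← Int.cast_smul_eq_zsmul ℝ, ← h]
  rfl

lemma affReflection_self {a : ℝ × EV n} (ha : a.2 ≠ 0) : affReflection a a = -a := by
  rw [affReflection_eq_sub_zsmul (m := 2) ((affPairing_eq_iff ha a).2 (by push_cast; ring))]
  abel

lemma inner_snd_affReflection {a : ℝ × EV n} (ha : a.2 ≠ 0) (b : ℝ × EV n) :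
    ⟪(affReflection a b).2, a.2⟫ = -⟪b.2, a.2⟫ := by
  have hpair := (affPairing_eq_iff ha b).1 rfl
  simp only [affReflection, Prod.snd_sub, Prod.smul_snd, inner_sub_left, real_inner_smul_left]
  rw [← affPairing]
  linarith

lemma snd_sum_zsmul {κ : Type*} [Fintype κ] (Δ : κ → ℝ × EV n) (c : κ → ℤ) :
    (∑ i, c i • Δ i).2 = ∑ i, (c i : ℝ) • (Δ i).2 := by
  simp [Prod.snd_sum, Int.cast_smul_eq_zsmul]

structure IsReflectionSystem (R : Set (ℝ × EV n)) : Prop where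
  snd_ne_zero : ∀ a ∈ R, a.2 ≠ 0
  exists_affPairing_eq_intCast : ∀ a ∈ R, ∀ b ∈ R, ∃ m : ℤ, affPairing a b = m
  affReflection_mem : ∀ a ∈ R, ∀ b ∈ R, affReflection a b ∈ R

structure IsRootBasis {κ : Type*} [Fintype κ] (R : Set (ℝ × EV n)) (Δ : κ → ℝ × EV n) :
    Prop where
  mem : ∀ i, Δ i ∈ R
  linearIndependent : LinearIndependent ℝ Δ
  exists_nonneg_or_nonpos : ∀ a ∈ R,
    (∃ c : κ → ℤ, (∀ i, 0 ≤ c i) ∧ a = ∑ i, c i • Δ i) ∨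
      (∃ c : κ → ℤ, (∀ i, c i ≤ 0) ∧ a = ∑ i, c i • Δ i)

namespace IsRootBasis

variable {κ : Type*} [Fintype κ] {R : Set (ℝ × EV n)} {Δ : κ → ℝ × EV n}

theorem eq_of_sum_zsmul_eq (hB : IsRootBasis R Δ) {c d : κ → ℤ}
    (h : ∑ i, c i • Δ i = ∑ i, d i • Δ i) : c = d :=
  funext (Fintype.linearIndependent_iffₛ.1 (hB.linearIndependent.restrict_scalars' ℤ) c d h)

theorem nonneg_or_nonpos (hB : IsRootBasis R Δ) {c : κ → ℤ} (hc : ∑ i, c i • Δ i ∈ R) :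
    (∀ i, 0 ≤ c i) ∨ ∀ i, c i ≤ 0 := by
  rcases hB.exists_nonneg_or_nonpos _ hc with ⟨d, hd, hcd⟩ | ⟨d, hd, hcd⟩
  · exact Or.inl (hB.eq_of_sum_zsmul_eq hcd ▸ hd)
  · exact Or.inr (hB.eq_of_sum_zsmul_eq hcd ▸ hd)

theorem isEvenVertex (hR : IsReflectionSystem R) (hB : IsRootBasis R Δ) {i : κ}
    (hi : ∀ a ∈ R, ∃ m : ℤ, affPairing (Δ i) a = 2 * m) :
    IsEvenVertex Finset.univ (fun j => (Δ j).2) i := by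
  intro a _
  obtain ⟨m, hm⟩ := hi _ (hB.mem a)
  refine ⟨m, ?_⟩
  have := (affPairing_eq_iff (hR.snd_ne_zero _ (hB.mem i)) _).1 hm
  linarith

variable [DecidableEq κ]

/-- If `⟪Δ a, Δ b⟫ > 0`, the root `s_b (Δ a) = Δ a - m Δ b` with `m > 0` has coefficients of
both signs. -/
theorem inner_nonpos (hR : IsReflectionSystem R) (hB : IsRootBasis R Δ) {a b : κ} (hab : a ≠ b) :
    ⟪(Δ a).2, (Δ b).2⟫ ≤ 0 := by
  by_contra! hpos
  obtain ⟨m, hm⟩ := hR.exists_affPairing_eq_intCast _ (hB.mem b) _ (hB.mem a)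
  have hm0 : 0 < m := by exact_mod_cast hm ▸ affPairing_pos (hR.snd_ne_zero _ (hB.mem b)) hpos
  have hmem := hR.affReflection_mem _ (hB.mem b) _ (hB.mem a)
  rw [affReflection_eq_sub_zsmul hm, ← one_zsmul (Δ a), ← Finset.sum_single_zsmul,
    ← Finset.sum_sub_single_zsmul] at hmem
  rcases hB.nonneg_or_nonpos hmem with h | h
  · have := h b
    simp only [Pi.sub_apply, Pi.single_eq_same, Pi.single_eq_of_ne hab.symm] at this
    omega
  · have := h a
    simp [Pi.single_eq_of_ne hab] at this

/-- Induction on the height: if `⟪r, Δ p⟫ > 0` for some `p ∈ A`, the root `s_p r` is either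
positive and lower, or negative, in which case `r` is a multiple of `Δ p`. -/
theorem snd_mem_span_or_mem_span_of_nonneg (hR : IsReflectionSystem R) (hB : IsRootBasis R Δ)
    {A : Finset κ} (hA : ∀ a ∈ A, ∀ b ∉ A, ⟪(Δ a).2, (Δ b).2⟫ = 0) (c : κ → ℤ)
    (hc : ∀ i, 0 ≤ c i) (hr : ∑ i, c i • Δ i ∈ R) :
    (∑ i, c i • Δ i).2 ∈ Submodule.span ℝ ((fun i => (Δ i).2) '' A) ∨
      (∑ i, c i • Δ i).2 ∈ Submodule.span ℝ ((fun i => (Δ i).2) '' ↑Aᶜ) := by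
  by_cases hle : ∀ p ∈ A, ⟪(∑ i, c i • Δ i).2, (Δ p).2⟫ ≤ 0
  · rw [snd_sum_zsmul] at hle ⊢
    exact Or.inr (mem_span_compl_of_inner_nonpos hA (fun i => by exact_mod_cast hc i) hle)
  push Not at hle
  obtain ⟨p, hpA, hpos⟩ := hle
  have hp0 := hR.snd_ne_zero _ (hB.mem p)
  have hpU : (Δ p).2 ∈ Submodule.span ℝ ((fun i => (Δ i).2) '' A) :=
    Submodule.subset_span ⟨p, hpA, rfl⟩
  obtain ⟨m, hm⟩ := hR.exists_affPairing_eq_intCast _ (hB.mem p) _ hr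
  have hm0 : 0 < m := by exact_mod_cast hm ▸ affPairing_pos hp0 hpos
  have hrefl := hR.affReflection_mem _ (hB.mem p) _ hr
  have hinner := inner_snd_affReflection hp0 (∑ i, c i • Δ i)
  rw [affReflection_eq_sub_zsmul hm, ← Finset.sum_sub_single_zsmul] at hrefl hinner
  rcases hB.nonneg_or_nonpos hrefl with hc' | hc'
  · rcases hB.snd_mem_span_or_mem_span_of_nonneg hR hA _ hc' hrefl with hU | hU
    · left
      rw [Finset.sum_sub_single_zsmul, Prod.snd_sub] at hU
      simpa using Submodule.add_mem _ hU (zsmul_mem hpU m)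
    · rw [real_inner_comm, (isOrtho_span_image_compl hA).inner_eq hpU hU] at hinner
      linarith
  · left
    have hsingle : ∑ i, c i • Δ i = c p • Δ p := by
      refine Fintype.sum_eq_single p fun i hi => ?_
      have := hc' i
      simp only [Pi.sub_apply, Pi.single_eq_of_ne hi, sub_zero] at this
      rw [le_antisymm this (hc i), zero_smul]
    rw [hsingle, Prod.smul_snd]
    exact Submodule.smul_of_tower_mem _ _ hpU
termination_by (∑ i, c i).toNat
decreasing_by
  have hsum : ∑ i, (c - Pi.single p m : κ → ℤ) i = ∑ i, c i - m := by
    simp [Finset.sum_sub_distrib]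
  have := Finset.sum_nonneg fun i (_ : i ∈ Finset.univ) => hc' i
  omega

theorem snd_mem_span_or_mem_span (hR : IsReflectionSystem R) (hB : IsRootBasis R Δ)
    {A : Finset κ} (hA : ∀ a ∈ A, ∀ b ∉ A, ⟪(Δ a).2, (Δ b).2⟫ = 0) {r : ℝ × EV n} (hr : r ∈ R) :
    r.2 ∈ Submodule.span ℝ ((fun i => (Δ i).2) '' A) ∨
      r.2 ∈ Submodule.span ℝ ((fun i => (Δ i).2) '' ↑Aᶜ) := by
  rcases hB.exists_nonneg_or_nonpos r hr with ⟨c, hc, rfl⟩ | ⟨c, hc, rfl⟩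
  · exact hB.snd_mem_span_or_mem_span_of_nonneg hR hA c hc hr
  · have hneg : ∑ i, (-c) i • Δ i ∈ R := by
      simpa [neg_smul, Finset.sum_neg_distrib, affReflection_self (hR.snd_ne_zero _ hr)] using
        hR.affReflection_mem _ hr _ hr
    simpa [neg_smul, Finset.sum_neg_distrib] using
      hB.snd_mem_span_or_mem_span_of_nonneg hR hA (-c) (fun i => neg_nonneg.2 (hc i)) hneg

theorem connected (hR : IsReflectionSystem R) (hB : IsRootBasis R Δ)
    (hirr : ∀ R₁ R₂ : Set (ℝ × EV n), R = R₁ ∪ R₂ →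
      (∀ a ∈ R₁, ∀ b ∈ R₂, ⟪a.2, b.2⟫ = 0) → R₁ = ∅ ∨ R₂ = ∅)
    (A : Finset κ) (hA : ∀ a ∈ A, ∀ b ∈ Finset.univ, b ∉ A → ⟪(Δ a).2, (Δ b).2⟫ = 0) :
    A = ∅ ∨ A = Finset.univ := by
  set U := Submodule.span ℝ ((fun i => (Δ i).2) '' A)
  set U' := Submodule.span ℝ ((fun i => (Δ i).2) '' ↑Aᶜ)
  have hA' : ∀ a ∈ A, ∀ b ∉ A, ⟪(Δ a).2, (Δ b).2⟫ = 0 := fun a ha b =>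
    hA a ha b (Finset.mem_univ b)
  rcases hirr {r ∈ R | r.2 ∈ U} {r ∈ R | r.2 ∈ U'}
    (Set.ext fun r => ⟨fun hr => (hB.snd_mem_span_or_mem_span hR hA' hr).imp (⟨hr, ·⟩) (⟨hr, ·⟩),
      by rintro (⟨hr, -⟩ | ⟨hr, -⟩) <;> exact hr⟩)
    (fun a ha b hb => (isOrtho_span_image_compl hA').inner_eq ha.2 hb.2) with h | h
  · refine Or.inl (Finset.eq_empty_of_forall_notMem fun a ha => ?_)
    exact (h ▸ ⟨hB.mem a, Submodule.subset_span ⟨a, ha, rfl⟩⟩ : Δ a ∈ (∅ : Set _))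
  · refine Or.inr (Finset.eq_univ_of_forall fun b => by_contra fun hb => ?_)
    exact (h ▸ ⟨hB.mem b, Submodule.subset_span ⟨b, Finset.mem_compl.2 hb, rfl⟩⟩ :
      Δ b ∈ (∅ : Set _))

theorem isAffineSimpleFamily (hR : IsReflectionSystem R) (hB : IsRootBasis R Δ)
    (hirr : ∀ R₁ R₂ : Set (ℝ × EV n), R = R₁ ∪ R₂ →
      (∀ a ∈ R₁, ∀ b ∈ R₂, ⟪a.2, b.2⟫ = 0) → R₁ = ∅ ∨ R₂ = ∅)
    (hκ : n < Fintype.card κ) : IsAffineSimpleFamily Finset.univ fun i => (Δ i).2 where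
  inner_nonpos a _ b _ hab := hB.inner_nonpos hR hab
  connected A _ hA := hB.connected hR hirr A hA
  ne_zero a _ := hR.snd_ne_zero _ (hB.mem a)
  crystallographic a _ b _ := by
    obtain ⟨m, hm⟩ := hR.exists_affPairing_eq_intCast _ (hB.mem b) _ (hB.mem a)
    exact ⟨m, (affPairing_eq_iff (hR.snd_ne_zero _ (hB.mem b)) _).1 hm⟩
  dependent := by
    have hdep : ¬ LinearIndependent ℝ fun i => (Δ i).2 := fun h => by
      simpa using (h.fintype_card_le_finrank.trans_lt' hκ)
    obtain ⟨t, ht, i, hi⟩ := Fintype.not_linearIndependent_iff.1 hdep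
    exact ⟨t, ht, i, Finset.mem_univ i, hi⟩

end IsRootBasis

end AffineRootSystem

theorem doubling_index_set_card_le_two_general {n : ℕ}
    (R : Set (ℝ × EV n)) (Δ : Fin (n + 1) → ℝ × EV n)
    -- affine root system axioms
    (hnz : ∀ a ∈ R, a.2 ≠ 0)
    (hcrys : ∀ a ∈ R, ∀ b ∈ R, ∃ m : ℤ, affPairing a b = (m : ℝ))
    (hrefl : ∀ a ∈ R, ∀ b ∈ R, affReflection a b ∈ R)
    -- irreducibility
    (hirr : ∀ R₁ R₂ : Set (ℝ × EV n), R = R₁ ∪ R₂ →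
      (∀ a ∈ R₁, ∀ b ∈ R₂, ⟪a.2, b.2⟫ = 0) → R₁ = ∅ ∨ R₂ = ∅)
    -- `Δ` is an ordered basis of `R`
    (hΔmem : ∀ i, Δ i ∈ R)
    (hΔind : LinearIndependent ℝ Δ)
    (hΔbasis : ∀ a ∈ R,
      (∃ cf : Fin (n + 1) → ℤ, (∀ i, 0 ≤ cf i) ∧ a = ∑ i, cf i • Δ i) ∨
      (∃ cf : Fin (n + 1) → ℤ, (∀ i, cf i ≤ 0) ∧ a = ∑ i, cf i • Δ i)) :
    Set.ncard {i : Fin (n + 1) |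
      {x : ℝ | ∃ lam ∈ AddSubgroup.closure R, affPairing (Δ i) lam = x} =
        {x : ℝ | ∃ m : ℤ, x = 2 * (m : ℝ)}} ≤ 2 := by
  have hR : IsReflectionSystem R := ⟨hnz, hcrys, hrefl⟩
  have hB : IsRootBasis R Δ := ⟨hΔmem, hΔind, hΔbasis⟩
  have hS : {i : Fin (n + 1) |
      {x : ℝ | ∃ lam ∈ AddSubgroup.closure R, affPairing (Δ i) lam = x} =
        {x : ℝ | ∃ m : ℤ, x = 2 * (m : ℝ)}} ⊆
      {i | i ∈ Finset.univ ∧ IsEvenVertex Finset.univ (fun j => (Δ j).2) i} :=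
    fun i hi => ⟨Finset.mem_univ i, hB.isEvenVertex hR fun a ha =>
      (show _ = _ from hi).subset ⟨a, AddSubgroup.subset_closure ha, rfl⟩⟩
  exact (Set.ncard_le_ncard hS (Set.toFinite _)).trans
    (hB.isAffineSimpleFamily hR hirr (by simp)).ncard_isEvenVertex_le_two

theorem doubling_index_set_card_le_two {n : ℕ}
    (R : Set (ℝ × EV n)) (Δ : Fin (n + 1) → ℝ × EV n)
    -- affine root system axioms
    (hspan : Submodule.span ℝ R = ⊤)
    (hnz : ∀ a ∈ R, a.2 ≠ 0)
    (hcrys : ∀ a ∈ R, ∀ b ∈ R, ∃ m : ℤ, affPairing a b = (m : ℝ))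
    (hrefl : ∀ a ∈ R, ∀ b ∈ R, affReflection a b ∈ R)
    -- properness / local finiteness of the affine Weyl group action
    (hproper : ∀ K : Set ℝ, IsCompact K → ∀ α : EV n, {r ∈ K | (r, α) ∈ R}.Finite)
    -- each gradient is the gradient of at least two affine roots
    (htwo : ∀ a ∈ R, ∃ b ∈ R, b ≠ a ∧ b.2 = a.2)
    -- irreducibility
    (hirr : ∀ R₁ R₂ : Set (ℝ × EV n), R = R₁ ∪ R₂ →
      (∀ a ∈ R₁, ∀ b ∈ R₂, ⟪a.2, b.2⟫ = 0) → R₁ = ∅ ∨ R₂ = ∅)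
    -- `Δ` is an ordered basis of `R`
    (hΔmem : ∀ i, Δ i ∈ R)
    (hΔind : LinearIndependent ℝ Δ)
    (hΔbasis : ∀ a ∈ R,
      (∃ cf : Fin (n + 1) → ℤ, (∀ i, 0 ≤ cf i) ∧ a = ∑ i, cf i • Δ i) ∨
      (∃ cf : Fin (n + 1) → ℤ, (∀ i, cf i ≤ 0) ∧ a = ∑ i, cf i • Δ i)) :
    Set.ncard {i : Fin (n + 1) |
      {x : ℝ | ∃ lam ∈ AddSubgroup.closure R, affPairing (Δ i) lam = x} =
        {x : ℝ | ∃ m : ℤ, x = 2 * (m : ℝ)}} ≤ 2 :=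
  doubling_index_set_card_le_two_general R Δ hnz hcrys hrefl hirr hΔmem hΔind hΔbasis
end
end

section
/- The monic symmetric Macdonald polynomial of degree (λ_1, λ_2) for GL_2 (with λ_1 ≥ λ_2), given by P^+_λ(t_1,t_2) = t_1^{λ_1} t_2^{λ_2} · ₂φ₁(κ², q^{λ_2-λ_1}; q^{1+λ_2-λ_1}/κ²; q, q t_2/(κ² t_1)), is a symmetric Laurent polynomial in (t_1, t_2), i.e. invariant under interchanging t_1 and t_2, and its expansion in monomial symmetric functions has leading term m_{(λ_1,λ_2)} with coefficient 1. -/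
noncomputable section

/-- Finite `q`-shifted factorial `(x; q)_k = ∏_{j=0}^{k-1} (1 - q^j x)`. -/
def qPoch (q x : ℂ) (k : ℕ) : ℂ := ∏ j ∈ Finset.range k, (1 - q ^ j * x)

/-- The terminating basic hypergeometric series
`₂φ₁(a, q^{-m}; c; q, z) = ∑_{k=0}^{m} ((a;q)_k (q^{-m};q)_k / ((c;q)_k (q;q)_k)) z^k`. -/
def phi21 (q a b c z : ℂ) (m : ℕ) : ℂ :=
  ∑ k ∈ Finset.range (m + 1),
    (qPoch q a k * qPoch q b k / (qPoch q c k * qPoch q q k)) * z ^ k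

/-- The monic symmetric `GL₂` Macdonald polynomial of degree `(λ₁, λ₂)`, `λ₁ ≥ λ₂`:
`P⁺(t₁,t₂) = t₁^{λ₁} t₂^{λ₂} ₂φ₁(κ², q^{λ₂-λ₁}; q^{1+λ₂-λ₁}/κ²; q, q t₂/(κ² t₁))`. -/
def glTwoMacdonald (q κ : ℂ) (lam : ℤ × ℤ) (t₁ t₂ : ℂ) : ℂ :=
  t₁ ^ lam.1 * t₂ ^ lam.2 *
    phi21 q (κ ^ 2) (q ^ (lam.2 - lam.1)) (q ^ (1 + lam.2 - lam.1) / κ ^ 2)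
      (q * t₂ / (κ ^ 2 * t₁)) (lam.1 - lam.2).toNat

/-- The orbit sum (monomial symmetric Laurent polynomial) `m_{(a,b)}(t₁,t₂)`. -/
def orbitSum (a b : ℤ) (t₁ t₂ : ℂ) : ℂ :=
  if a = b then t₁ ^ a * t₂ ^ b else t₁ ^ a * t₂ ^ b + t₁ ^ b * t₂ ^ a

/-!
Write `m = λ₁ - λ₂`. Expanding `₂φ₁` gives `P⁺_λ = ∑_{k ≤ m} c_k t₁^{λ₁-k} t₂^{λ₂+k}`. Reversing the
terminating `q`-shifted factorials `(q^{-m}; q)_k` and `(q^{1-m}/κ²; q)_k` yields the closed form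
`c_k = (q;q)_m (κ²;q)_k (κ²;q)_{m-k} / ((κ²;q)_m (q;q)_k (q;q)_{m-k})`, which is invariant under
`k ↦ m - k`. Pairing the terms `k` and `m - k` writes `P⁺_λ` as `∑_{k ≤ m/2} c_k m_{(λ₁-k, λ₂+k)}`
with `c_0 = 1`, and symmetry follows because each orbit sum is symmetric.
-/

open Finset

theorem Finset.sum_range_succ_eq_sum_range_half {M : Type*} [AddCommMonoid M]
    (f : ℕ → M) (m : ℕ) :
    ∑ k ∈ range (m + 1), f k =
      ∑ k ∈ range (m / 2 + 1), if 2 * k = m then f k else f k + f (m - k) := by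
  have hsplit : m + 1 = (m / 2 + 1) + (m - m / 2) := by omega
  have hupper : ∑ k ∈ range (m - m / 2), f (m / 2 + 1 + k) =
      ∑ k ∈ range (m / 2 + 1), if 2 * k = m then 0 else f (m - k) := by
    rw [← sum_range_reflect, sum_ite, sum_const_zero, zero_add]
    have hfilter : {k ∈ range (m / 2 + 1) | ¬2 * k = m} = range (m - m / 2) := by
      ext k
      simp only [mem_filter, mem_range]
      omega
    rw [hfilter]
    refine sum_congr rfl fun k hk => ?_
    rw [mem_range] at hk
    congr 1
    omega
  rw [hsplit, sum_range_add, hupper, ← sum_add_distrib]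
  refine sum_congr rfl fun k _ => ?_
  split_ifs <;> simp

theorem orbitSum_comm (a b : ℤ) (t₁ t₂ : ℂ) : orbitSum a b t₂ t₁ = orbitSum a b t₁ t₂ := by
  unfold orbitSum
  split_ifs with hab
  · rw [hab, mul_comm]
  · rw [mul_comm, add_comm, mul_comm (t₂ ^ b)]

theorem sum_mul_zpow_eq_sum_orbitSum {c : ℕ → ℂ} {m : ℕ} (hc : ∀ k ≤ m, c (m - k) = c k)
    {a b : ℤ} (hab : a = b + m) (t₁ t₂ : ℂ) :
    ∑ k ∈ range (m + 1), c k * (t₁ ^ (a - k) * t₂ ^ (b + k)) =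
      ∑ k ∈ range (m / 2 + 1), c k * orbitSum (a - k) (b + k) t₁ t₂ := by
  rw [Finset.sum_range_succ_eq_sum_range_half]
  refine sum_congr rfl fun k hk => ?_
  have hkm : k ≤ m := by rw [mem_range] at hk; omega
  unfold orbitSum
  split_ifs with h₁ h₂ h₂
  · rfl
  · omega
  · omega
  · rw [hc k hkm, Nat.cast_sub hkm, show a - (m - k : ℤ) = b + k by omega,
      show b + (m - k : ℤ) = a - k by omega]
    ring

theorem qPoch_succ (q x : ℂ) (n : ℕ) : qPoch q x (n + 1) = qPoch q x n * (1 - q ^ n * x) :=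
  prod_range_succ _ _

theorem qPoch_ne_zero {q x : ℂ} (hq : ‖q‖ ≤ 1) (hx : ‖x‖ < 1) (n : ℕ) : qPoch q x n ≠ 0 := by
  refine prod_ne_zero_iff.mpr fun j _ => sub_ne_zero.mpr fun h => ?_
  have : ‖q ^ j * x‖ < 1 := by
    rw [norm_mul, norm_pow]
    exact mul_lt_one_of_nonneg_of_lt_one_right (pow_le_one₀ (norm_nonneg q) hq)
      (norm_nonneg x) hx
  rw [← h, norm_one] at this
  exact this.false

/- Reversal of a terminating `q`-shifted factorial: `1 - a q^{j-m} = -a q^{j-m} (1 - q^{m-j}/a)`,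
and the factors `1 - q^{m-j}/a`, `j < k`, are those of `(q/a; q)_m` missing from `(q/a; q)_{m-k}`. -/
theorem qPoch_mul_qPoch_sub {q a : ℂ} (hq : q ≠ 0) (ha : a ≠ 0) {m k : ℕ} (hk : k ≤ m) :
    qPoch q (a * q ^ (-(m : ℤ))) k * qPoch q (q / a) (m - k) =
      qPoch q (q / a) m * ∏ j ∈ range k, -(a * q ^ ((j : ℤ) - m)) := by
  induction k with
  | zero => simp [qPoch]
  | succ k ih =>
    have hmk : m - k = m - (k + 1) + 1 := by omega
    rw [hmk, qPoch_succ] at ih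
    have hexp : q ^ k * q ^ (-(m : ℤ)) = q ^ ((k : ℤ) - m) := by
      rw [← zpow_natCast, ← zpow_add₀ hq, sub_eq_add_neg]
    have hinv : q ^ ((k : ℤ) - m) * (q ^ (m - (k + 1)) * q) = 1 := by
      rw [← pow_succ, ← zpow_natCast, ← zpow_add₀ hq,
        show (k : ℤ) - m + ((m - (k + 1) + 1 : ℕ) : ℤ) = 0 by omega, zpow_zero]
    have hfactor : 1 - q ^ k * (a * q ^ (-(m : ℤ))) =
        -(a * q ^ ((k : ℤ) - m)) * (1 - q ^ (m - (k + 1)) * (q / a)) := by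
      field_simp
      linear_combination -a * hexp - hinv
    rw [qPoch_succ, hfactor, prod_range_succ, ← mul_assoc (qPoch q (q / a) m), ← ih (by omega)]
    ring

def glTwoCoeff (q κ : ℂ) (m k : ℕ) : ℂ :=
  qPoch q (κ ^ 2) k * qPoch q (q ^ (-(m : ℤ))) k /
    (qPoch q (q ^ (1 - (m : ℤ)) / κ ^ 2) k * qPoch q q k) * (q / κ ^ 2) ^ k

theorem glTwoCoeff_zero (q κ : ℂ) (m : ℕ) : glTwoCoeff q κ m 0 = 1 := by
  simp [glTwoCoeff, qPoch]

theorem glTwoCoeff_eq {q κ : ℂ} (hq : ‖q‖ < 1) (hq₀ : q ≠ 0) (hκ : ‖κ‖ < 1) (hκ₀ : κ ≠ 0)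
    {m k : ℕ} (hk : k ≤ m) :
    glTwoCoeff q κ m k =
      qPoch q q m * qPoch q (κ ^ 2) k * qPoch q (κ ^ 2) (m - k) /
        (qPoch q (κ ^ 2) m * qPoch q q k * qPoch q q (m - k)) := by
  have hκ2 : ‖κ ^ 2‖ < 1 := by rw [norm_pow]; exact pow_lt_one₀ (norm_nonneg κ) hκ two_ne_zero
  have hqq (n : ℕ) : qPoch q q n ≠ 0 := qPoch_ne_zero hq.le hq n
  have hqκ (n : ℕ) : qPoch q (κ ^ 2) n ≠ 0 := qPoch_ne_zero hq.le hκ2 n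
  set sign := ∏ j ∈ range k, -(q ^ ((j : ℤ) - m)) with hsign
  have hsign₀ : sign ≠ 0 := prod_ne_zero_iff.mpr fun j _ => neg_ne_zero.mpr (zpow_ne_zero _ hq₀)
  have hb : qPoch q (q ^ (-(m : ℤ))) k * qPoch q q (m - k) = qPoch q q m * sign := by
    simpa using qPoch_mul_qPoch_sub hq₀ one_ne_zero hk
  have hc : qPoch q (q ^ (1 - (m : ℤ)) / κ ^ 2) k * qPoch q (κ ^ 2) (m - k) =
      qPoch q (κ ^ 2) m * ((q / κ ^ 2) ^ k * sign) := by
    have h := qPoch_mul_qPoch_sub hq₀ (div_ne_zero hq₀ (pow_ne_zero 2 hκ₀)) hk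
    rw [div_div_cancel₀ hq₀, div_mul_eq_mul_div, ← zpow_one_add₀ hq₀, ← sub_eq_add_neg] at h
    rw [h, hsign, prod_congr rfl fun j _ => (mul_neg (q / κ ^ 2) _).symm, prod_mul_distrib,
      prod_const, card_range]
  rw [glTwoCoeff, eq_div_of_mul_eq (hqq _) hb, eq_div_of_mul_eq (hqκ _) hc]
  field_simp

theorem glTwoCoeff_sub {q κ : ℂ} (hq : ‖q‖ < 1) (hq₀ : q ≠ 0) (hκ : ‖κ‖ < 1) (hκ₀ : κ ≠ 0)
    {m k : ℕ} (hk : k ≤ m) : glTwoCoeff q κ m (m - k) = glTwoCoeff q κ m k := by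
  rw [glTwoCoeff_eq hq hq₀ hκ hκ₀ (Nat.sub_le m k), glTwoCoeff_eq hq hq₀ hκ hκ₀ hk,
    Nat.sub_sub_self hk]
  ring

theorem glTwoMacdonald_eq_sum (q κ : ℂ) {lam : ℤ × ℤ} {m : ℕ} (hm : lam.1 = lam.2 + m)
    {t₁ t₂ : ℂ} (ht₁ : t₁ ≠ 0) (ht₂ : t₂ ≠ 0) :
    glTwoMacdonald q κ lam t₁ t₂ =
      ∑ k ∈ range (m + 1), glTwoCoeff q κ m k * (t₁ ^ (lam.1 - k) * t₂ ^ (lam.2 + k)) := by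
  rw [glTwoMacdonald, phi21, show (lam.1 - lam.2).toNat = m by omega,
    show lam.2 - lam.1 = -(m : ℤ) by omega, show 1 + lam.2 - lam.1 = 1 - (m : ℤ) by omega,
    mul_sum]
  refine sum_congr rfl fun k _ => ?_
  rw [glTwoCoeff, zpow_sub₀ ht₁, zpow_add₀ ht₂, zpow_natCast, zpow_natCast, mul_div_mul_comm q t₂,
    mul_pow, div_pow t₂]
  field_simp

theorem glTwo_macdonald_symmetric_and_triangular
    (q κ : ℝ) (hq : 0 < q ∧ q < 1) (hκ : 0 < κ ∧ κ < 1)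
    (lam : ℤ × ℤ) (hlam : lam.2 ≤ lam.1) :
    (∀ t₁ t₂ : ℂ, t₁ ≠ 0 → t₂ ≠ 0 →
        glTwoMacdonald (q : ℂ) (κ : ℂ) lam t₁ t₂ =
          glTwoMacdonald (q : ℂ) (κ : ℂ) lam t₂ t₁) ∧
    ∃ d : ℕ → ℂ, d 0 = 1 ∧
      ∀ t₁ t₂ : ℂ, t₁ ≠ 0 → t₂ ≠ 0 →
        glTwoMacdonald (q : ℂ) (κ : ℂ) lam t₁ t₂ =
          ∑ k ∈ Finset.range ((lam.1 - lam.2).toNat / 2 + 1),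
            d k * orbitSum (lam.1 - k) (lam.2 + k) t₁ t₂ := by
  have norm_ofReal_lt_one {x : ℝ} (hx : 0 < x ∧ x < 1) : ‖(x : ℂ)‖ < 1 := by
    rw [Complex.norm_real, Real.norm_of_nonneg hx.1.le]; exact hx.2
  have hpalindrome (k : ℕ) (hk : k ≤ (lam.1 - lam.2).toNat) :=
    glTwoCoeff_sub (norm_ofReal_lt_one hq) (Complex.ofReal_ne_zero.mpr hq.1.ne')
      (norm_ofReal_lt_one hκ) (Complex.ofReal_ne_zero.mpr hκ.1.ne') hk
  have hm : lam.1 = lam.2 + (lam.1 - lam.2).toNat := by omega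
  have hexpand (t₁ t₂ : ℂ) (ht₁ : t₁ ≠ 0) (ht₂ : t₂ ≠ 0) :=
    (glTwoMacdonald_eq_sum (q : ℂ) (κ : ℂ) hm ht₁ ht₂).trans
      (sum_mul_zpow_eq_sum_orbitSum hpalindrome hm t₁ t₂)
  refine ⟨fun t₁ t₂ ht₁ ht₂ => ?_, _, glTwoCoeff_zero _ _ _, hexpand⟩
  simp only [hexpand t₁ t₂ ht₁ ht₂, hexpand t₂ t₁ ht₂ ht₁, orbitSum_comm]
end
end
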